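/- Every proper interval graph is a 50% max-tolerance graph. -/
import Mathlib


variable {V : Type*}

/-- A max-tolerance representation: each vertex `u` gets an interval `[a u, b u]` and a
positive tolerance `t u`, and distinct `u, v` are adjacent iff the length of
`[a u, b u] ∩ [a v, b v]` (zero if empty) is at least `max (t u) (t v)`. -/
def IsMaxTolRep (G : SimpleGraph V) (a b t : V → ℝ) : Prop :=
  (∀ u, a u ≤ b u) ∧ (∀ u, 0 < t u) ∧
    ∀ u v : V, u ≠ v →
      (G.Adj u v ↔ max (t u) (t v) ≤ max (min (b u) (b v) - max (a u) (a v)) 0)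

/-- A 50% max-tolerance graph: a max-tolerance representation in which each tolerance is
half the length of the corresponding interval. -/
def IsHalfMaxTolG (G : SimpleGraph V) : Prop :=
  ∃ a b : V → ℝ, IsMaxTolRep G a b (fun u => (b u - a u) / 2)

/-- A proper interval graph: each vertex gets a closed real interval, distinct vertices
are adjacent iff their intervals intersect, and no interval properly contains another. -/
def IsProperIntervalGraph (G : SimpleGraph V) : Prop :=
  ∃ a b : V → ℝ, (∀ u, a u ≤ b u) ∧
    (∀ u v : V, u ≠ v →
      (G.Adj u v ↔ (Set.Icc (a u) (b u) ∩ Set.Icc (a v) (b v)).Nonempty)) ∧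
    ∀ u v : V, u ≠ v → ¬(a u ≤ a v ∧ b v ≤ b u ∧ ¬(a u = a v ∧ b u = b v))

attribute [local instance] Classical.propDecidable

noncomputable def mkc (a b : ℕ → ℝ) : ℕ → ℝ
  | 0 => 0
  | (i+1) =>
    if a (i+1) = a i then mkc a b i
    else if h : b i < a (i+1) then mkc a b i + 2
    else
      have hex : ∃ j, a (i+1) ≤ b j := ⟨i, not_lt.1 h⟩
      (max (mkc a b i)
        (if Nat.find hex = 0 then mkc a b i else mkc a b (Nat.find hex - 1) + 1)
        + (mkc a b (Nat.find hex) + 1)) / 2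
  termination_by i => i
  decreasing_by
    all_goals first
      | omega
      | (have := Nat.find_min' hex (not_lt.1 h); omega)

lemma mkc_inv (a b : ℕ → ℝ)
    (hs : ∀ i j : ℕ, i ≤ j → a i ≤ a j)
    (hab : ∀ i, a i ≤ b i)
    (H : ∀ i j, a i ≤ a j → b j ≤ b i → a i = a j ∧ b i = b j) :
    ∀ i, ∀ j, j < i →
      ((a j = a i → mkc a b j = mkc a b i) ∧
      (a j < a i → mkc a b j < mkc a b i) ∧
      (a i ≤ b j → mkc a b i - mkc a b j ≤ 1) ∧
      (a i < b j → mkc a b i - mkc a b j < 1) ∧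
      (b j < a i → 1 < mkc a b i - mkc a b j)) := by
  have hb : ∀ i j : ℕ, i ≤ j → b i ≤ b j := by
    intro i j hij
    by_contra hlt
    push_neg at hlt
    exact absurd (H i j (hs i j hij) hlt.le).2 (ne_of_gt hlt)
  have heq : ∀ i j : ℕ, a i = a j → b i = b j := by
    intro i j hij
    rcases le_total (b j) (b i) with h | h
    · exact (H i j hij.le h).2
    · exact ((H j i hij.ge h).2).symm
  intro i
  induction i using Nat.strong_induction_on with
  | _ i IH =>
  set c := mkc a b with hcdef
  have cmono : ∀ p q : ℕ, q < i → p ≤ q → c p ≤ c q := by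
    intro p q hq hpq
    rcases eq_or_lt_of_le hpq with rfl | hlt
    · exact le_refl _
    · rcases eq_or_lt_of_le (hs p q hpq) with he | hl
      · exact ((IH q hq p hlt).1 he).le
      · exact ((IH q hq p hlt).2.1 hl).le
  match i, IH, cmono with
  | 0, IH, cmono => intro j hj; omega
  | (i+1), IH, cmono =>
  intro j hj
  have hji : j ≤ i := by omega
  by_cases hA : a (i+1) = a i
  · have hcb : b (i+1) = b i := heq _ _ hA
    have hc : c (i+1) = c i := by rw [hcdef, mkc, if_pos hA]
    rcases eq_or_lt_of_le hji with rfl | hjlt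
    · refine ⟨fun _ => hc.symm, fun h => absurd hA.symm (ne_of_lt h), ?_, ?_, ?_⟩
      · intro _; rw [hc]; norm_num
      · intro _; rw [hc]; norm_num
      · intro h; rw [hA] at h; exact absurd (hab _) (not_le.2 h)
    · obtain ⟨P1, P2, P3, P4, P5⟩ := IH i (by omega) j hjlt
      rw [hA, hc]
      exact ⟨P1, P2, P3, P4, P5⟩
  · have hAlt : a i < a (i+1) :=
      lt_of_le_of_ne (hs i (i+1) (by omega)) (fun h => hA h.symm)
    have hbji : b j ≤ b i := hb j i hji
    have hcj : c j ≤ c i := cmono j i (by omega) hji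
    by_cases hB : b i < a (i+1)
    · have hc : c (i+1) = c i + 2 := by
        rw [hcdef, mkc, if_neg hA, dif_pos hB]
      refine ⟨?_, ?_, ?_, ?_, ?_⟩
      · intro h; exfalso; have := hab j; linarith
      · intro _; rw [hc]; linarith
      · intro h; exfalso; linarith
      · intro h; exfalso; linarith
      · intro _; rw [hc]; linarith
    · have hex : ∃ k, a (i+1) ≤ b k := ⟨i, not_lt.1 hB⟩
      have hc : c (i+1) =
          (max (c i) (if Nat.find hex = 0 then c i else c (Nat.find hex - 1) + 1)
            + (c (Nat.find hex) + 1)) / 2 := by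
        rw [hcdef, mkc, if_neg hA, dif_neg hB]
      set f := Nat.find hex with hfdef
      have hf_le : f ≤ i := Nat.find_min' hex (not_lt.1 hB)
      have hfb : a (i+1) ≤ b f := Nat.find_spec hex
      have hfmin : ∀ k, k < f → b k < a (i+1) := fun k hk => not_le.1 (Nat.find_min hex hk)
      set L := if f = 0 then c i else c (f-1) + 1 with hLdef
      have key1 : c i < c f + 1 := by
        rcases eq_or_lt_of_le hf_le with he | hflt
        · rw [he]; linarith
        · have hafb : a i < b f := lt_of_lt_of_le hAlt hfb
          have := (IH i (by omega) f hflt).2.2.2.1 hafb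
          linarith
      have key2 : L < c f + 1 := by
        rw [hLdef]
        split_ifs with hf0
        · exact key1
        · have hf1 : f - 1 < f := by omega
          have hbf : b (f-1) < b f := lt_of_lt_of_le (hfmin _ hf1) hfb
          have haf : a (f-1) < a f := by
            rcases eq_or_lt_of_le (hs (f-1) f (by omega)) with he | hl
            · exact absurd (heq _ _ he) (ne_of_lt hbf)
            · exact hl
          have := (IH f (by omega) (f-1) hf1).2.1 haf
          linarith
      have keyM : max (c i) L < c f + 1 := max_lt key1 key2
      have hx1 : max (c i) L < c (i+1) := by rw [hc]; linarith
      have hx2 : c (i+1) < c f + 1 := by rw [hc]; linarith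
      have hciM : c i ≤ max (c i) L := le_max_left _ _
      refine ⟨?_, ?_, ?_, ?_, ?_⟩
      · intro h; exfalso; have := hs j i hji; linarith
      · intro _; linarith
      · intro h
        have hfj : f ≤ j := by
          by_contra hfj
          push_neg at hfj
          exact absurd h (not_le.2 (hfmin j hfj))
        have : c f ≤ c j := cmono f j (by omega) hfj
        linarith
      · intro h
        have hfj : f ≤ j := by
          by_contra hfj
          push_neg at hfj
          linarith [hfmin j hfj]
        have : c f ≤ c j := cmono f j (by omega) hfj
        linarith
      · intro h
        have hjf : j < f := by
          by_contra hjf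
          push_neg at hjf
          linarith [hb f j hjf]
        have hf0 : f ≠ 0 := by omega
        have hL : L = c (f-1) + 1 := if_neg hf0
        have : c j ≤ c (f-1) := cmono j (f-1) (by omega) (by omega)
        have hLM : L ≤ max (c i) L := le_max_right _ _
        linarith

lemma mkc_key (a b : ℕ → ℝ)
    (hs : ∀ i j : ℕ, i ≤ j → a i ≤ a j)
    (hab : ∀ i, a i ≤ b i)
    (H : ∀ i j, a i ≤ a j → b j ≤ b i → a i = a j ∧ b i = b j) :
    ∀ i j, i < j → (mkc a b i ≤ mkc a b j ∧ (a j ≤ b i ↔ mkc a b j - mkc a b i ≤ 1)) := by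
  intro i j hij
  obtain ⟨P1, P2, P3, P4, P5⟩ := mkc_inv a b hs hab H j i hij
  refine ⟨?_, P3, ?_⟩
  · rcases eq_or_lt_of_le (hs i j hij.le) with he | hl
    · exact (P1 he).le
    · exact (P2 hl).le
  · intro h
    by_contra hba
    push_neg at hba
    linarith [P5 hba]

/-- Every proper interval graph is a 50% max-tolerance graph. -/
theorem properInterval_is_half_maxtol [Fintype V] (G : SimpleGraph V)
    (hG : IsProperIntervalGraph G) : IsHalfMaxTolG G := by
  classical
  obtain ⟨a, b, hab, hadj, hprop⟩ := hG
  suffices h : ∃ A B : V → ℝ, (∀ u, A u ≤ B u) ∧ (∀ u, 0 < (B u - A u)/2) ∧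
      ∀ u v : V, u ≠ v →
        (G.Adj u v ↔ max ((B u - A u)/2) ((B v - A v)/2) ≤
          max (min (B u) (B v) - max (A u) (A v)) 0) by
    obtain ⟨A, B, h1, h2, h3⟩ := h
    exact ⟨A, B, h1, h2, h3⟩
  rcases isEmpty_or_nonempty V with hV | hV
  · exact ⟨fun _ => 0, fun _ => 2, fun u => by norm_num, fun u => by norm_num,
      fun u => (hV.elim u)⟩
  set n := Fintype.card V with hn
  have hn0 : 0 < n := Fintype.card_pos
  set g : Fin n ≃ V := (Fintype.equivFin V).symm with hg
  set σ := Tuple.sort (a ∘ g) with hσ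
  set e : Fin n ≃ V := σ.trans g with he
  have hmono : Monotone (fun i : Fin n => a (e i)) := Tuple.monotone_sort (a ∘ g)
  set m : ℕ → Fin n := fun k => ⟨min k (n-1), by omega⟩ with hm
  set A : ℕ → ℝ := fun k => a (e (m k)) with hA
  set B : ℕ → ℝ := fun k => b (e (m k)) with hB
  have hs : ∀ i j : ℕ, i ≤ j → A i ≤ A j := by
    intro i j hij
    exact hmono (show m i ≤ m j by simp only [hm, Fin.mk_le_mk]; omega)
  have hab' : ∀ k, A k ≤ B k := fun k => hab _
  have H : ∀ i j, A i ≤ A j → B j ≤ B i → A i = A j ∧ B i = B j := by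
    intro i j h1 h2
    by_cases heq : e (m i) = e (m j)
    · exact ⟨congrArg a heq, congrArg b heq⟩
    · have hp := hprop (e (m i)) (e (m j)) heq
      by_contra hz
      exact hp ⟨h1, h2, hz⟩
  set c : ℕ → ℝ := mkc A B with hc
  have key : ∀ i j : ℕ, i < j → (c i ≤ c j ∧ (A j ≤ B i ↔ c j - c i ≤ 1)) :=
    fun i j hij => mkc_key A B hs hab' H i j hij
  set idx : V → ℕ := fun u => (e.symm u : ℕ) with hidx
  have hmidx : ∀ u, m (idx u) = e.symm u := by
    intro u
    have := (e.symm u).isLt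
    simp only [hm, hidx]
    exact Fin.ext (by simp; omega)
  have hAu : ∀ u, A (idx u) = a u := by
    intro u; simp only [hA, hmidx u, Equiv.apply_symm_apply]
  have hBu : ∀ u, B (idx u) = b u := by
    intro u; simp only [hB, hmidx u, Equiv.apply_symm_apply]
  have hidxinj : ∀ u w : V, idx u = idx w → u = w := by
    intro u w h
    have : e.symm u = e.symm w := Fin.ext h
    simpa using congrArg e this
  refine ⟨fun u => c (idx u), fun u => c (idx u) + 2, fun u => by dsimp only; linarith, fun u => by dsimp only; norm_num, ?_⟩
  have main : ∀ u w : V, u ≠ w → idx u < idx w →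
      (G.Adj u w ↔
        max ((c (idx u) + 2 - c (idx u))/2) ((c (idx w) + 2 - c (idx w))/2) ≤
          max (min (c (idx u) + 2) (c (idx w) + 2) - max (c (idx u)) (c (idx w))) 0) := by
    intro u w huw hlt
    obtain ⟨hcm, hiff⟩ := key (idx u) (idx w) hlt
    rw [hAu, hBu] at hiff
    have hauw : a u ≤ a w := by
      have := hs (idx u) (idx w) hlt.le
      rwa [hAu, hAu] at this
    rw [hadj u w huw, Set.Icc_inter_Icc, Set.nonempty_Icc]
    have htol : max ((c (idx u) + 2 - c (idx u))/2) ((c (idx w) + 2 - c (idx w))/2) = 1 := by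
      norm_num
    rw [htol]
    have hminB : min (c (idx u) + 2) (c (idx w) + 2) = c (idx u) + 2 :=
      min_eq_left (by linarith)
    have hmaxA : max (c (idx u)) (c (idx w)) = c (idx w) := max_eq_right hcm
    rw [hminB, hmaxA]
    constructor
    · intro h
      have haw : a w ≤ b u := le_trans (le_sup_right) (le_trans h inf_le_left)
      have := hiff.1 haw
      rw [le_max_iff]; left; linarith
    · intro h
      rw [le_max_iff] at h
      rcases h with h | h
      · have : c (idx w) - c (idx u) ≤ 1 := by linarith
        have haw := hiff.2 this
        refine sup_le (le_inf (hab u) ?_) (le_inf haw (hab w))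
        exact le_trans hauw (hab w)
      · norm_num at h
  intro u w huw
  rcases lt_trichotomy (idx u) (idx w) with h | h | h
  · exact main u w huw h
  · exact absurd (hidxinj u w h) huw
  · rw [G.adj_comm, max_comm ((c (idx u) + 2 - c (idx u))/2) _,
      min_comm (c (idx u) + 2) _, max_comm (c (idx u)) _]
    exact main w u (Ne.symm huw) h
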